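/- arXiv:1604.08623 — 6 statements merged into one kernel-verified Lean document; each statement's English description precedes it below -/
import Mathlib

section
/- Let μ be a Borel probability measure on ℝ² with first marginal μ⁽¹⁾ = μ ∘ π₁⁻¹ where π₁(s,t) = s. Then for every z ∈ ℂ with Im z ≠ 0, every m > 0, and every λ ∈ ℂ \ ℝ, one has |λ G_μ(z,λ) − G_{μ⁽¹⁾}(z)| ≤ m/(|Im z||Im λ|) + (α_λ + 1)/|Im z| · μ({(s,t) : |t| > m}), where α_λ = √(1 + (Re λ/Im λ)²). -/
/-!
Write `λ ((z - s)(λ - t))⁻¹ - (z - s)⁻¹ = (z - s)⁻¹ (λ/(λ - t) - 1)`. The first factor is at most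
`1/|Im z|`. On `{|t| ≤ m}` the second is `|t/(λ - t)| ≤ m/|Im λ|`; on the tail `{|t| > m}` it is at
most `|λ/(λ - t)| + 1 ≤ α_λ + 1`. Integrating this pointwise bound against the probability
measure `μ` gives the estimate.
-/

open MeasureTheory Complex

namespace Complex

lemma norm_inv_sub_ofReal_le {z : ℂ} (hz : z.im ≠ 0) (s : ℝ) : ‖(z - s)⁻¹‖ ≤ |z.im|⁻¹ := by
  rw [norm_inv]
  apply inv_anti₀ (abs_pos.2 hz)
  simpa using abs_im_le_norm (z - s)

lemma sub_ofReal_ne_zero {z : ℂ} (hz : z.im ≠ 0) (s : ℝ) : z - s ≠ 0 := fun h =>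
  hz (by simpa using congrArg im h)

lemma sqrt_one_add_re_div_im_sq {z : ℂ} (hz : z.im ≠ 0) :
    √(1 + (z.re / z.im) ^ 2) = ‖z‖ / |z.im| := by
  rw [norm_def, normSq_apply, ← Real.sqrt_sq_eq_abs,
    ← Real.sqrt_div (add_nonneg (mul_self_nonneg _) (mul_self_nonneg _))]
  congr 1
  field_simp
  ring

lemma norm_mul_inv_sub_ofReal_le {z : ℂ} (hz : z.im ≠ 0) (t : ℝ) :
    ‖z * (z - t)⁻¹‖ ≤ √(1 + (z.re / z.im) ^ 2) := by
  rw [sqrt_one_add_re_div_im_sq hz, norm_mul, div_eq_mul_inv]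
  exact mul_le_mul_of_nonneg_left (norm_inv_sub_ofReal_le hz t) (norm_nonneg _)

lemma norm_mul_inv_sub_ofReal_sub_one_le {z : ℂ} (hz : z.im ≠ 0) (t : ℝ) :
    ‖z * (z - t)⁻¹ - 1‖ ≤ |t| / |z.im| := by
  have hzt := sub_ofReal_ne_zero hz t
  have h : z * (z - t)⁻¹ - 1 = t * (z - t)⁻¹ := by
    field_simp
    ring
  rw [h, norm_mul, norm_real, Real.norm_eq_abs, div_eq_mul_inv]
  exact mul_le_mul_of_nonneg_left (norm_inv_sub_ofReal_le hz t) (abs_nonneg t)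

lemma integrable_inv_sub_ofReal {X : Type*} [MeasurableSpace X] {ν : Measure X}
    [IsFiniteMeasure ν] {z : ℂ} (hz : z.im ≠ 0) {φ : X → ℝ} (hφ : Measurable φ) :
    Integrable (fun x => (z - φ x)⁻¹) ν := by
  refine .of_bound ?_ |z.im|⁻¹ (ae_of_all _ fun x => norm_inv_sub_ofReal_le hz (φ x))
  exact (measurable_const.sub (measurable_ofReal.comp hφ)).inv.aestronglyMeasurable

lemma norm_mul_inv_mul_sub_inv_le_of_abs_le {z w : ℂ} (hz : z.im ≠ 0) (hw : w.im ≠ 0) (s : ℝ)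
    {t m : ℝ} (ht : |t| ≤ m) :
    ‖w * ((z - s) * (w - t))⁻¹ - (z - s)⁻¹‖ ≤ m / (|z.im| * |w.im|) := calc
  _ = ‖(z - s)⁻¹‖ * ‖w * (w - t)⁻¹ - 1‖ := by rw [← norm_mul, mul_inv]; ring_nf
  _ ≤ |z.im|⁻¹ * (m / |w.im|) := by
    gcongr
    · exact norm_inv_sub_ofReal_le hz s
    · exact (norm_mul_inv_sub_ofReal_sub_one_le hw t).trans (by gcongr)
  _ = m / (|z.im| * |w.im|) := by field_simp

lemma norm_mul_inv_mul_sub_inv_le {z w : ℂ} (hz : z.im ≠ 0) (hw : w.im ≠ 0) (s t : ℝ) :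
    ‖w * ((z - s) * (w - t))⁻¹ - (z - s)⁻¹‖ ≤ (√(1 + (w.re / w.im) ^ 2) + 1) / |z.im| := calc
  _ = ‖(z - s)⁻¹‖ * ‖w * (w - t)⁻¹ - 1‖ := by rw [← norm_mul, mul_inv]; ring_nf
  _ ≤ |z.im|⁻¹ * (√(1 + (w.re / w.im) ^ 2) + 1) := by
    gcongr
    · exact norm_inv_sub_ofReal_le hz s
    · exact (norm_sub_le _ _).trans (by simpa using norm_mul_inv_sub_ofReal_le hw t)
  _ = _ := inv_mul_eq_div _ _

end Complex

lemma MeasureTheory.norm_integral_le_add_mul_measureReal {X E : Type*} [MeasurableSpace X]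
    [NormedAddCommGroup E] [NormedSpace ℝ E] {μ : Measure X} [IsProbabilityMeasure μ]
    {f : X → E} {S : Set X} (hS : MeasurableSet S) {a b : ℝ}
    (h_compl : ∀ x ∉ S, ‖f x‖ ≤ a) (h_mem : ∀ x ∈ S, ‖f x‖ ≤ a + b) :
    ‖∫ x, f x ∂μ‖ ≤ a + b * μ.real S := by
  have hg : Integrable (fun x => a + S.indicator (fun _ => b) x) μ :=
    (integrable_const a).add ((integrable_const b).indicator hS)
  refine (norm_integral_le_of_norm_le hg (ae_of_all _ fun x => ?_)).trans_eq ?_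
  · by_cases hx : x ∈ S
    · simpa [hx] using h_mem x hx
    · simpa [hx] using h_compl x hx
  · rw [integral_add (integrable_const a) ((integrable_const b).indicator hS),
      integral_indicator_const b hS]
    simp [mul_comm]

theorem marginal_cauchy_estimate (μ : Measure (ℝ × ℝ)) [IsProbabilityMeasure μ]
    (z lam : ℂ) (m : ℝ) (hz : z.im ≠ 0) (hlam : lam.im ≠ 0) (hm : 0 < m) :
    ‖lam * (∫ p : ℝ × ℝ, ((z - (p.1 : ℂ)) * (lam - (p.2 : ℂ)))⁻¹ ∂μ) -
        ∫ x : ℝ, (z - (x : ℂ))⁻¹ ∂(μ.map Prod.fst)‖ ≤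
      m / (|z.im| * |lam.im|) +
        (Real.sqrt (1 + (lam.re / lam.im) ^ 2) + 1) / |z.im| *
          (μ {p : ℝ × ℝ | m < |p.2|}).toReal := by
  have hfst := integrable_inv_sub_ofReal (ν := μ) hz measurable_fst
  have hprod : Integrable (fun p : ℝ × ℝ => lam * ((z - p.1) * (lam - p.2))⁻¹) μ := by
    simp_rw [mul_inv]
    exact ((integrable_inv_sub_ofReal hlam measurable_snd).bdd_mul hfst.aestronglyMeasurable
      (ae_of_all _ fun p => norm_inv_sub_ofReal_le hz p.1)).const_mul lam
  rw [integral_map measurable_fst.aemeasurable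
      (integrable_inv_sub_ofReal hz measurable_id').aestronglyMeasurable,
    ← integral_const_mul, ← integral_sub hprod hfst]
  refine norm_integral_le_add_mul_measureReal
    (measurableSet_lt measurable_const measurable_snd.abs) ?_ ?_
  · rintro ⟨s, t⟩ ht
    exact norm_mul_inv_mul_sub_inv_le_of_abs_le hz hlam s (not_lt.1 ht)
  · rintro ⟨s, t⟩ -
    exact (norm_mul_inv_mul_sub_inv_le hz hlam s t).trans
      (le_add_of_nonneg_left (div_nonneg hm.le (by positivity)))
end

section
/- Let μ be a Borel probability measure on ℝ² with first marginal μ⁽¹⁾. If λ_n ∈ ℂ \ ℝ is a sequence with |λ_n| → ∞ and sup_n √(1+(Re λ_n/Im λ_n)²) < ∞ (non-tangential convergence to infinity), then for every fixed z with Im z ≠ 0, λ_n G_μ(z, λ_n) → G_{μ⁽¹⁾}(z) as n → ∞. -/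
/-!
Writing `λ ((z - s)(λ - t))⁻¹ = (z - s)⁻¹ · λ / (λ - t)`, the second factor tends to `1` pointwise
as `|λ| → ∞`, and it is bounded by `|λ| / |Im λ| = √(1 + (Re λ / Im λ)²)` because `|λ - t| ≥ |Im λ|`;
the non-tangential condition makes this bound uniform, so dominated convergence applies.
-/

open MeasureTheory Complex Filter Topology

theorem Complex.norm_eq_sqrt_one_add_re_div_im_sq_mul_abs_im {w : ℂ} (hw : w.im ≠ 0) :
    ‖w‖ = Real.sqrt (1 + (w.re / w.im) ^ 2) * |w.im| := by
  rw [Complex.norm_def, Complex.normSq_apply, ← Real.sqrt_sq_eq_abs,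
    ← Real.sqrt_mul (by positivity)]
  congr 1
  field_simp
  ring

theorem Complex.norm_inv_sub_ofReal_le_s3 {w : ℂ} (hw : w.im ≠ 0) (t : ℝ) :
    ‖(w - t)⁻¹‖ ≤ |w.im|⁻¹ := by
  rw [norm_inv]
  refine inv_anti₀ (abs_pos.mpr hw) ?_
  simpa using abs_im_le_norm (w - t)

theorem Complex.norm_div_sub_ofReal_le {w : ℂ} (hw : w.im ≠ 0) (t : ℝ) :
    ‖w / (w - t)‖ ≤ Real.sqrt (1 + (w.re / w.im) ^ 2) := by
  calc ‖w / (w - t)‖ = ‖w‖ * ‖(w - t)⁻¹‖ := by rw [div_eq_mul_inv, norm_mul]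
    _ ≤ ‖w‖ * |w.im|⁻¹ := by gcongr; exact norm_inv_sub_ofReal_le_s3 hw t
    _ = Real.sqrt (1 + (w.re / w.im) ^ 2) := by
      rw [norm_eq_sqrt_one_add_re_div_im_sq_mul_abs_im hw]
      field_simp [abs_pos.mpr hw]

theorem tendsto_div_sub_const_one {𝕜 ι : Type*} [NormedField 𝕜] {l : Filter ι} {f : ι → 𝕜}
    (hf : Tendsto (fun i => ‖f i‖) l atTop) (c : 𝕜) :
    Tendsto (fun i => f i / (f i - c)) l (𝓝 1) := by
  have hinv : Tendsto (fun i => (f i)⁻¹) l (𝓝 0) :=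
    tendsto_inv₀_cobounded.comp (tendsto_norm_atTop_iff_cobounded.mp hf)
  have hlim : Tendsto (fun i => (1 - c * (f i)⁻¹)⁻¹) l (𝓝 1) := by
    simpa using
      (tendsto_const_nhds (x := (1 : 𝕜)).sub (tendsto_const_nhds.mul hinv)).inv₀ (by simp)
  refine hlim.congr' ?_
  filter_upwards [hf.eventually_gt_atTop 0] with i hi
  rw [← inv_div, sub_div, div_self (norm_pos_iff.mp hi), div_eq_mul_inv]

theorem marginal_cauchy_nontangential_limit (μ : Measure (ℝ × ℝ)) [IsProbabilityMeasure μ]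
    (lam : ℕ → ℂ) (him : ∀ n, (lam n).im ≠ 0)
    (habs : Tendsto (fun n => ‖lam n‖) atTop atTop)
    (hnt : ∃ C : ℝ, ∀ n, Real.sqrt (1 + ((lam n).re / (lam n).im) ^ 2) ≤ C)
    (z : ℂ) (hz : z.im ≠ 0) :
    Tendsto (fun n => lam n * ∫ p : ℝ × ℝ, ((z - (p.1 : ℂ)) * (lam n - (p.2 : ℂ)))⁻¹ ∂μ)
      atTop (𝓝 (∫ x : ℝ, (z - (x : ℂ))⁻¹ ∂(μ.map Prod.fst))) := by
  obtain ⟨C, hC⟩ := hnt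
  have hfactor : ∀ n (p : ℝ × ℝ), lam n * ((z - p.1) * (lam n - p.2))⁻¹
      = (z - p.1)⁻¹ * (lam n / (lam n - p.2)) := fun n p => by rw [mul_inv]; ring
  rw [integral_map measurable_fst.aemeasurable (by fun_prop)]
  simp_rw [← integral_const_mul, hfactor]
  refine tendsto_integral_of_dominated_convergence (fun _ => |z.im|⁻¹ * C)
    (fun n => by fun_prop) (integrable_const _) (fun n => ?_) ?_
  · filter_upwards with p
    rw [norm_mul]
    exact mul_le_mul (norm_inv_sub_ofReal_le_s3 hz p.1)
      ((norm_div_sub_ofReal_le (him n) p.2).trans (hC n)) (norm_nonneg _) (by positivity)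
  · filter_upwards with p
    simpa using tendsto_const_nhds.mul (tendsto_div_sub_const_one habs (p.2 : ℂ))
end

section
/- Let {μ_n} be Borel probability measures on ℝ². Suppose that for every ε > 0 there exists m > 0 such that |(iy)(iv) G_{μ_n}(iy, iv) − 1| < ε for all y, v ≥ m and all n ≥ 1. Then the sequence {μ_n} is tight. -/
/-!
At y = v = m the kernel (im)²/((im - s)(im - t)) equals 1/((1 + ia)(1 + ib)) with a = s/m,
b = t/m. Its real part is at most 1 everywhere and at most 3/4 as soon as |a| ≥ 1 or |b| ≥ 1, so
(1/4) μₙ(ℝ² \ [-m, m]²) ≤ ∫ (1 - Re kernel) dμₙ = Re (1 - (im)² G_{μₙ}(im, im)), which is small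
uniformly in n.
-/

open MeasureTheory Complex

lemma one_le_norm_one_add_mul_I (a : ℝ) : 1 ≤ ‖1 + a * I‖ := by
  simpa using abs_re_le_norm (1 + a * I)

lemma one_add_mul_I_ne_zero (a : ℝ) : 1 + a * I ≠ 0 :=
  norm_pos_iff.mp (one_pos.trans_le (one_le_norm_one_add_mul_I a))

lemma norm_inv_one_add_mul_I_mul_le_one (a b : ℝ) : ‖((1 + a * I) * (1 + b * I))⁻¹‖ ≤ 1 := by
  rw [norm_inv, norm_mul]
  exact inv_le_one_of_one_le₀ <|
    one_le_mul_of_one_le_of_one_le (one_le_norm_one_add_mul_I a) (one_le_norm_one_add_mul_I b)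

lemma re_inv_one_add_mul_I_mul (a b : ℝ) :
    (((1 + a * I) * (1 + b * I))⁻¹).re = (1 - a * b) / ((1 + a ^ 2) * (1 + b ^ 2)) := by
  rw [inv_re, normSq_apply]
  simp only [mul_re, mul_im, add_re, add_im, one_re, one_im, ofReal_re, ofReal_im, I_re, I_im]
  congr 1 <;> ring

lemma re_inv_one_add_mul_I_mul_le_three_quarters {a b : ℝ} (h : 1 ≤ |a| ∨ 1 ≤ |b|) :
    (((1 + a * I) * (1 + b * I))⁻¹).re ≤ 3 / 4 := by
  rw [re_inv_one_add_mul_I_mul, div_le_iff₀ (by positivity)]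
  have : 1 ≤ a ^ 2 ∨ 1 ≤ b ^ 2 := by
    simpa only [one_le_sq_iff_one_le_abs] using h
  rcases this with h | h <;> nlinarith [sq_nonneg (a + b), sq_nonneg (a * b)]

lemma mul_I_mul_inv_sub_mul_sub {m : ℝ} (hm : m ≠ 0) (s t : ℝ) :
    (I * m) * (I * m) * ((I * m - s) * (I * m - t))⁻¹ =
      ((1 + ↑(s / m) * I) * (1 + ↑(t / m) * I))⁻¹ := by
  have hm' : (m : ℂ) ≠ 0 := ofReal_ne_zero.mpr hm
  have factor : ∀ x : ℝ, I * m - x = I * m * (1 + ↑(x / m) * I) := by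
    intro x
    rw [ofReal_div, mul_add, mul_one, show I * m * (x / m * I) = I * I * x by field_simp, I_mul_I]
    ring
  rw [factor s, factor t]
  field_simp [one_add_mul_I_ne_zero]

lemma mul_measureReal_le_norm_integral_sub_one {α : Type*} [MeasurableSpace α] {μ : Measure α}
    [IsProbabilityMeasure μ] {f : α → ℂ} (hf : Integrable f μ) (hf_re : ∀ x, (f x).re ≤ 1)
    {c : ℝ} (hc : 0 ≤ c) {s : Set α} (hs : ∀ x ∈ s, (f x).re ≤ 1 - c) :
    c * μ.real s ≤ ‖∫ x, f x ∂μ - 1‖ := by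
  have hf_re_int : Integrable (fun x => (f x).re) μ := hf.re
  have hg : Integrable (fun x => 1 - (f x).re) μ := (integrable_const 1).sub hf_re_int
  calc c * μ.real s ≤ c * μ.real {x | c ≤ 1 - (f x).re} :=
        mul_le_mul_of_nonneg_left (measureReal_mono fun x hx => by
          show c ≤ 1 - (f x).re; linarith [hs x hx]) hc
    _ ≤ ∫ x, 1 - (f x).re ∂μ :=
        mul_meas_ge_le_integral_of_nonneg (ae_of_all _ fun x => sub_nonneg.mpr (hf_re x)) hg c
    _ = (1 - ∫ x, f x ∂μ).re := by
        rw [integral_sub (integrable_const 1) hf_re_int, integral_const, probReal_univ, one_smul,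
          sub_re, one_re]
        exact congrArg _ (integral_re hf)
    _ ≤ ‖∫ x, f x ∂μ - 1‖ := by
        rw [← norm_neg, neg_sub]; exact re_le_norm _

lemma measureReal_outside_square_le {μ : Measure (ℝ × ℝ)} [IsProbabilityMeasure μ] {m : ℝ}
    (hm : 0 < m) :
    μ.real {p | ¬(|p.1| ≤ m ∧ |p.2| ≤ m)} ≤
      4 * ‖(I * m) * (I * m) * ∫ p : ℝ × ℝ, ((I * m - p.1) * (I * m - p.2))⁻¹ ∂μ - 1‖ := by
  set K : ℝ × ℝ → ℂ := fun p => ((1 + ↑(p.1 / m) * I) * (1 + ↑(p.2 / m) * I))⁻¹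
  have hK : Integrable K μ := by
    refine Integrable.of_bound ?_ 1 (ae_of_all _ fun p => norm_inv_one_add_mul_I_mul_le_one _ _)
    refine (Continuous.inv₀ (by fun_prop) fun p => ?_).aestronglyMeasurable
    exact mul_ne_zero (one_add_mul_I_ne_zero _) (one_add_mul_I_ne_zero _)
  have hK_re : ∀ p, (K p).re ≤ 1 := fun p =>
    (re_le_norm _).trans (norm_inv_one_add_mul_I_mul_le_one _ _)
  have hK_out : ∀ p ∈ {p : ℝ × ℝ | ¬(|p.1| ≤ m ∧ |p.2| ≤ m)}, (K p).re ≤ 1 - 1 / 4 := by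
    intro p hp
    refine (re_inv_one_add_mul_I_mul_le_three_quarters ?_).trans (by norm_num)
    have hp : m < |p.1| ∨ m < |p.2| := by
      rw [← not_le, ← not_le, ← not_and_or]; exact hp
    simp only [abs_div, abs_of_pos hm, one_le_div hm]
    exact hp.imp le_of_lt le_of_lt
  rw [← integral_const_mul]
  simp_rw [mul_I_mul_inv_sub_mul_sub hm.ne']
  linarith [mul_measureReal_le_norm_integral_sub_one hK hK_re (by norm_num) hK_out]

theorem tightness_from_uniform_cauchy (μs : ℕ → Measure (ℝ × ℝ))
    (hμs : ∀ n, IsProbabilityMeasure (μs n))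
    (h : ∀ ε : ℝ, 0 < ε → ∃ m : ℝ, 0 < m ∧ ∀ y v : ℝ, m ≤ y → m ≤ v → ∀ n : ℕ,
      ‖(I * (y : ℂ)) * (I * (v : ℂ)) *
          (∫ p : ℝ × ℝ, ((I * (y : ℂ) - (p.1 : ℂ)) * (I * (v : ℂ) - (p.2 : ℂ)))⁻¹ ∂(μs n)) - 1‖ < ε) :
    ∀ ε : ℝ, 0 < ε → ∃ m : ℝ, 0 < m ∧ ∀ n : ℕ,
      μs n {p : ℝ × ℝ | ¬(|p.1| ≤ m ∧ |p.2| ≤ m)} < ENNReal.ofReal ε := by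
  intro ε hε
  obtain ⟨m, hm, hG⟩ := h (ε / 4) (by linarith)
  refine ⟨m, hm, fun n => ?_⟩
  have := hμs n
  rw [ENNReal.lt_ofReal_iff_toReal_lt (measure_ne_top _ _), ← measureReal_def]
  linarith [measureReal_outside_square_le (μ := μs n) hm, hG m m le_rfl le_rfl n]
end

section
/- Let {σ_n} be a tight sequence of finite positive Borel measures on ℝ² with uniformly bounded total masses, and let {γ_n} be a bounded sequence of real numbers. Then lim_{y→0⁺} sup_{n≥1} | i γ_n y + ∫_{ℝ²} ((−iy)² − iys)/(1 + iys) dσ_n(s,t) | = 0. -/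
/-!
For `0 < y ≤ 1` the kernel `((-iy)² - iys)/(1 + iys)` has modulus at most `1` everywhere and at
most `y (1 + m)` on the strip `|s| ≤ m`. Choosing `m` by tightness, the part of the integral outside
the square `[-m, m]²` is small uniformly in `n`, while the part inside, like `iγₙy`, is `O(y)`
uniformly in `n` because the masses and the `γₙ` are bounded.
-/

open MeasureTheory Complex

noncomputable def axisKernel (y s : ℝ) : ℂ := ((-I * y) ^ 2 - I * y * s) / (1 + I * y * s)

lemma one_le_norm_one_add_I_mul (y s : ℝ) : 1 ≤ ‖1 + I * y * s‖ := by
  simpa using abs_re_le_norm (1 + I * y * s)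

lemma norm_axisKernel_le_one {y : ℝ} (hy : |y| ≤ 1) (s : ℝ) : ‖axisKernel y s‖ ≤ 1 := by
  have hden : 0 < ‖1 + I * y * s‖ := one_pos.trans_le (one_le_norm_one_add_I_mul y s)
  have hnum_sq : normSq ((-I * y) ^ 2 - I * y * s) = y ^ 4 + y ^ 2 * s ^ 2 := by
    simp [normSq_apply, pow_two]; ring
  have hden_sq : normSq (1 + I * y * s) = 1 + y ^ 2 * s ^ 2 := by simp [normSq_apply]; ring
  have hy4 : y ^ 4 ≤ 1 := by
    simpa only [Even.pow_abs ⟨2, rfl⟩] using pow_le_one₀ (abs_nonneg y) hy (n := 4)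
  rw [axisKernel, norm_div, div_le_one hden, ← sq_le_sq₀ (norm_nonneg _) hden.le,
    Complex.sq_norm, Complex.sq_norm, hnum_sq, hden_sq]
  linarith

lemma norm_axisKernel_le (y s : ℝ) : ‖axisKernel y s‖ ≤ |y| * (|y| + |s|) := by
  rw [axisKernel, norm_div]
  calc ‖(-I * y) ^ 2 - I * y * s‖ / ‖1 + I * y * s‖ ≤ ‖(-I * y) ^ 2 - I * y * s‖ :=
        div_le_self (norm_nonneg _) (one_le_norm_one_add_I_mul y s)
    _ ≤ ‖(-I * y) ^ 2‖ + ‖I * y * s‖ := norm_sub_le _ _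
    _ = |y| * (|y| + |s|) := by
        simp only [norm_pow, norm_mul, norm_neg, norm_I, norm_real, Real.norm_eq_abs, one_mul]
        ring

lemma norm_integral_le_of_norm_le_piecewise {α E : Type*} [MeasurableSpace α]
    [NormedAddCommGroup E] [NormedSpace ℝ E] {μ : Measure α} [IsFiniteMeasure μ]
    {f : α → E} {T : Set α} (hT : MeasurableSet T) {a b : ℝ}
    (hin : ∀ p ∈ T, ‖f p‖ ≤ a) (hout : ∀ p ∉ T, ‖f p‖ ≤ b) :
    ‖∫ p, f p ∂μ‖ ≤ a * μ.real T + b * μ.real Tᶜ := by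
  classical
  set g := T.piecewise (fun _ ↦ a) (fun _ ↦ b)
  have hbound : ∀ p, ‖f p‖ ≤ g p := by
    intro p
    by_cases hp : p ∈ T
    · simpa [g, hp] using hin p hp
    · simpa [g, hp] using hout p hp
  have ha := (integrable_const (μ := μ) a).integrableOn (s := T)
  have hb := (integrable_const (μ := μ) b).integrableOn (s := Tᶜ)
  calc ‖∫ p, f p ∂μ‖ ≤ ∫ p, g p ∂μ :=
        norm_integral_le_of_norm_le (Integrable.piecewise hT ha hb) (.of_forall hbound)
    _ = a * μ.real T + b * μ.real Tᶜ := by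
        rw [integral_piecewise hT ha hb, setIntegral_const, setIntegral_const, smul_eq_mul,
          smul_eq_mul, mul_comm a, mul_comm b]

lemma norm_integral_axisKernel_le {μ : Measure (ℝ × ℝ)} [IsFiniteMeasure μ] {y m : ℝ}
    (hy₀ : 0 ≤ y) (hy₁ : y ≤ 1) (hm : 0 ≤ m) :
    ‖∫ p, axisKernel y p.1 ∂μ‖ ≤
      μ.real {p | ¬(|p.1| ≤ m ∧ |p.2| ≤ m)} + y * (1 + m) * μ.real Set.univ := by
  set T := {p : ℝ × ℝ | ¬(|p.1| ≤ m ∧ |p.2| ≤ m)}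
  have hT : MeasurableSet T := by measurability
  have hcore : ∀ p ∉ T, ‖axisKernel y p.1‖ ≤ y * (1 + m) := by
    intro p hp
    have hp₁ : |p.1| ≤ m := (not_not.mp hp).1
    calc ‖axisKernel y p.1‖ ≤ |y| * (|y| + |p.1|) := norm_axisKernel_le y p.1
      _ ≤ y * (1 + m) := by rw [abs_of_nonneg hy₀]; gcongr
  calc ‖∫ p, axisKernel y p.1 ∂μ‖ ≤ 1 * μ.real T + y * (1 + m) * μ.real Tᶜ :=
        norm_integral_le_of_norm_le_piecewise hT
          (fun p _ ↦ norm_axisKernel_le_one (abs_le.mpr ⟨by linarith, hy₁⟩) p.1) hcore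
    _ ≤ μ.real T + y * (1 + m) * μ.real Set.univ := by
        rw [one_mul]
        gcongr
        exacts [measure_ne_top μ _, Set.subset_univ _]

theorem uniform_smallness_near_zero (σs : ℕ → Measure (ℝ × ℝ))
    (hfin : ∀ n, IsFiniteMeasure (σs n))
    (hmass : ∃ M : ℝ, ∀ n, ((σs n) Set.univ).toReal ≤ M)
    (htight : ∀ ε : ℝ, 0 < ε → ∃ m : ℝ, 0 < m ∧ ∀ n,
      ((σs n) {p : ℝ × ℝ | ¬(|p.1| ≤ m ∧ |p.2| ≤ m)}).toReal < ε)
    (γ : ℕ → ℝ) (hγ : ∃ C : ℝ, ∀ n, |γ n| ≤ C) :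
    ∀ ε : ℝ, 0 < ε → ∃ δ : ℝ, 0 < δ ∧ ∀ y : ℝ, 0 < y → y < δ → ∀ n : ℕ,
      ‖I * (γ n : ℂ) * (y : ℂ) +
          ∫ p : ℝ × ℝ,
            ((-I * (y : ℂ)) ^ 2 - I * (y : ℂ) * (p.1 : ℂ)) / (1 + I * (y : ℂ) * (p.1 : ℂ))
            ∂(σs n)‖ < ε := by
  intro ε hε
  obtain ⟨M, hM⟩ := hmass
  obtain ⟨C, hC⟩ := hγ
  obtain ⟨m, hm, htail⟩ := htight (ε / 2) (half_pos hε)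
  have hC₀ : 0 ≤ C := (abs_nonneg _).trans (hC 0)
  have hM₀ : 0 ≤ M := ENNReal.toReal_nonneg.trans (hM 0)
  refine ⟨min 1 (ε / (2 * (C + (1 + m) * M + 1))), by positivity, fun y hy hyδ n ↦ ?_⟩
  have hy₁ : y ≤ 1 := hyδ.le.trans (min_le_left _ _)
  have hyδ' : y * (2 * (C + (1 + m) * M + 1)) < ε :=
    (lt_div_iff₀ (by positivity)).mp (hyδ.trans_le (min_le_right _ _))
  have := hfin n
  calc _ ≤ ‖I * (γ n : ℂ) * (y : ℂ)‖ + ‖∫ p, axisKernel y p.1 ∂σs n‖ := norm_add_le _ _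
    _ ≤ |γ n| * y + ((σs n).real {p | ¬(|p.1| ≤ m ∧ |p.2| ≤ m)}
          + y * (1 + m) * (σs n).real Set.univ) := by
        gcongr
        · simp [abs_of_pos hy]
        · exact norm_integral_axisKernel_le hy.le hy₁ hm.le
    _ < ε := by
        have htail_n : (σs n).real {p | ¬(|p.1| ≤ m ∧ |p.2| ≤ m)} < ε / 2 := htail n
        have hmass_n : (σs n).real Set.univ ≤ M := hM n
        linarith [mul_le_mul_of_nonneg_left (hC n) hy.le,
          mul_le_mul_of_nonneg_left hmass_n (by positivity : 0 ≤ y * (1 + m))]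
end

section
/- Let c ∈ (−1, 1). The function p(s,t) = (1−c²)/(2π²) · √(4−s²)√(4−t²) / (2(1−c²)² − c(1+c²)st + 2c²(s²+t²)) is well-defined and nonnegative on [−2,2] × [−2,2]; in particular the denominator 2(1−c²)² − c(1+c²)st + 2c²(s²+t²) is strictly positive for all s, t ∈ [−2,2]. -/
theorem bifree_gaussian_density_positive (c : ℝ) (hc : c ∈ Set.Ioo (-1 : ℝ) 1)
    (s t : ℝ) (hs : s ∈ Set.Icc (-2 : ℝ) 2) (ht : t ∈ Set.Icc (-2 : ℝ) 2) :
    0 < 2 * (1 - c ^ 2) ^ 2 - c * (1 + c ^ 2) * s * t + 2 * c ^ 2 * (s ^ 2 + t ^ 2) ∧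
      0 ≤ (1 - c ^ 2) / (2 * Real.pi ^ 2) *
        (Real.sqrt (4 - s ^ 2) * Real.sqrt (4 - t ^ 2) /
          (2 * (1 - c ^ 2) ^ 2 - c * (1 + c ^ 2) * s * t + 2 * c ^ 2 * (s ^ 2 + t ^ 2))) := by
  obtain ⟨hc1, hc2⟩ := hc
  obtain ⟨hs1, hs2⟩ := hs
  obtain ⟨ht1, ht2⟩ := ht
  have hs4 : s ^ 2 ≤ 4 := by nlinarith
  have ht4 : t ^ 2 ≤ 4 := by nlinarith
  have hq8 : (0:ℝ) ≤ 8 - s ^ 2 - t ^ 2 := by linarith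
  have hq0 : (0:ℝ) ≤ s ^ 2 + t ^ 2 := by positivity
  have h1c : (0:ℝ) ≤ 1 + c ^ 2 := by positivity
  have h1 : (0:ℝ) < 1 - c ^ 2 := by nlinarith
  have hsq : (0:ℝ) < (1 - c ^ 2) ^ 2 := by positivity
  have hD : 0 < 2 * (1 - c ^ 2) ^ 2 - c * (1 + c ^ 2) * s * t + 2 * c ^ 2 * (s ^ 2 + t ^ 2) := by
    rcases le_or_gt 0 c with hcpos | hcneg
    · have hP : (0:ℝ) < c ^ 4 - 2 * c ^ 3 + 6 * c ^ 2 - 2 * c + 1 := by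
        nlinarith [sq_nonneg (c ^ 2 - c), sq_nonneg (5 * c - 1)]
      have key : (0:ℝ) < (8 - s ^ 2 - t ^ 2) * (1 - c ^ 2) ^ 2 +
          (s ^ 2 + t ^ 2) * (c ^ 4 - 2 * c ^ 3 + 6 * c ^ 2 - 2 * c + 1) := by
        rcases hq8.lt_or_eq with h | h
        · nlinarith [mul_pos h hsq, mul_nonneg hq0 hP.le]
        · have hq : (0:ℝ) < s ^ 2 + t ^ 2 := by linarith
          nlinarith [mul_pos hq hP, mul_nonneg hq8 hsq.le]
      nlinarith [mul_nonneg (mul_nonneg hcpos h1c) (sq_nonneg (s - t)), key]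
    · have hcpos : (0:ℝ) ≤ -c := by linarith
      have hP : (0:ℝ) < c ^ 4 + 2 * c ^ 3 + 6 * c ^ 2 + 2 * c + 1 := by
        nlinarith [sq_nonneg (c ^ 2 + c), sq_nonneg (5 * c + 1)]
      have key : (0:ℝ) < (8 - s ^ 2 - t ^ 2) * (1 - c ^ 2) ^ 2 +
          (s ^ 2 + t ^ 2) * (c ^ 4 + 2 * c ^ 3 + 6 * c ^ 2 + 2 * c + 1) := by
        rcases hq8.lt_or_eq with h | h
        · nlinarith [mul_pos h hsq, mul_nonneg hq0 hP.le]
        · have hq : (0:ℝ) < s ^ 2 + t ^ 2 := by linarith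
          nlinarith [mul_pos hq hP, mul_nonneg hq8 hsq.le]
      nlinarith [mul_nonneg (mul_nonneg hcpos h1c) (sq_nonneg (s + t)), key]
  refine ⟨hD, ?_⟩
  have h2 := Real.sqrt_nonneg (4 - s ^ 2)
  have h3 := Real.sqrt_nonneg (4 - t ^ 2)
  positivity
end

section
/- Let ρ₁, ρ₂ be finite positive Borel measures and ρ a finite signed Borel measure on ℝ², all supported in the set U_{n+1} = {(s,t) : |s| ≥ 1/(n+1), |t| ≥ 1/(n+1)}, satisfying (1+s²)/s² dρ₁ = (1+t²)/t² dρ₂ = √(1+s²)√(1+t²)/(st) dρ as measures on U_{n+1}. Then the common measure τ := (1+s²)/s² dρ₁ is a finite positive measure, and if λ := τ(ℝ²) > 0 and μ := τ/λ, then for all z, w ∈ ℂ \ ℝ: ∫ (z²+zs)/(1−zs) dρ₁ + ∫ (w²+wt)/(1−wt) dρ₂ + ∫ zw√(1+s²)√(1+t²)/((1−zs)(1−wt)) dρ = az + bw − λ + λ ∫ 1/((1−zs)(1−wt)) dμ(s,t), where a = −λ ∫ s/(1+s²) dμ and b = −λ ∫ t/(1+t²) dμ. -/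
/-!
All integrals are rewritten against `τ`. Since `(z + x)/(1 - z x) · x²/(1 + x²) =
x/(1 - z x) - x/(1 + x²)`, the density of `ρ₁` turns its integrand into
`(1 - z s)⁻¹ - 1 - z s/(1 + s²)`, and likewise for `ρ₂`. The Jordan parts of `ρ` are `τ` with
densities the positive and negative parts of `st/(√(1 + s²) √(1 + t²))`, which turns the third
integrand into `((1 - z s)⁻¹ - 1)((1 - w t)⁻¹ - 1)`. The three integrands add up to
`((1 - z s)(1 - w t))⁻¹ - 1 - z s/(1 + s²) - w t/(1 + t²)`, whose `τ`-integral is the right-hand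
side once `μ` is unwound. Every integrand is bounded because `|Im z| ≤ ‖z‖ ‖1 - z x‖` for real `x`.
-/

open MeasureTheory Complex

/-- Integral of a complex-valued function against a signed measure, via the
Jordan decomposition. -/
noncomputable def signedIntegralC (s : MeasureTheory.SignedMeasure (ℝ × ℝ)) (f : ℝ × ℝ → ℂ) : ℂ :=
  (∫ p, f p ∂s.toJordanDecomposition.posPart) - ∫ p, f p ∂s.toJordanDecomposition.negPart

open scoped ComplexConjugate

theorem abs_im_le_norm_mul_norm_one_sub_mul_ofReal (z : ℂ) (x : ℝ) :
    |z.im| ≤ ‖z‖ * ‖1 - z * x‖ :=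
  calc |z.im| = |(conj z * (1 - z * x)).im| := by
        rw [show (conj z * (1 - z * x)).im = -z.im by simp [mul_sub]; ring, abs_neg]
    _ ≤ ‖conj z * (1 - z * x)‖ := abs_im_le_norm _
    _ = ‖z‖ * ‖1 - z * x‖ := by rw [norm_mul, norm_conj]

theorem one_sub_mul_ofReal_ne_zero {z : ℂ} (hz : z.im ≠ 0) (x : ℝ) : 1 - z * x ≠ 0 := by
  intro h
  have := abs_im_le_norm_mul_norm_one_sub_mul_ofReal z x
  rw [h, norm_zero, mul_zero] at this
  exact hz (abs_nonpos_iff.1 this)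

theorem norm_inv_one_sub_mul_ofReal_le {z : ℂ} (hz : z.im ≠ 0) (x : ℝ) :
    ‖(1 - z * x)⁻¹‖ ≤ ‖z‖ / |z.im| := by
  rw [norm_inv, inv_le_iff_one_le_mul₀ (norm_pos_iff.2 (one_sub_mul_ofReal_ne_zero hz x)),
    div_mul_eq_mul_div, one_le_div (abs_pos.2 hz)]
  exact abs_im_le_norm_mul_norm_one_sub_mul_ofReal z x

theorem abs_div_one_add_sq_le_one (x : ℝ) : |x / (1 + x ^ 2)| ≤ 1 := by
  have h : 0 < 1 + x ^ 2 := by positivity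
  rw [abs_div, abs_of_pos h, div_le_one h]
  nlinarith [sq_abs x, sq_nonneg (|x| - 1)]

theorem abs_mul_div_sqrt_one_add_sq_le_one (s t : ℝ) :
    |s * t / (Real.sqrt (1 + s ^ 2) * Real.sqrt (1 + t ^ 2))| ≤ 1 := by
  have h : 0 < Real.sqrt (1 + s ^ 2) * Real.sqrt (1 + t ^ 2) := by positivity
  rw [abs_div, abs_mul, abs_of_pos h, div_le_one h]
  gcongr <;> exact Real.abs_le_sqrt (by linarith)

theorem sq_div_one_add_sq_smul_eq {z : ℂ} (hz : z.im ≠ 0) (x : ℝ) :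
    (x ^ 2 / (1 + x ^ 2)) • ((z ^ 2 + z * x) / (1 - z * x)) =
      (1 - z * x)⁻¹ - 1 - z * ((x / (1 + x ^ 2) : ℝ) : ℂ) := by
  have h1 : (1 : ℂ) + x ^ 2 ≠ 0 := by exact_mod_cast (by positivity : (1 : ℝ) + x ^ 2 ≠ 0)
  have h2 : 1 - (x : ℂ) * z ≠ 0 := mul_comm z x ▸ one_sub_mul_ofReal_ne_zero hz x
  rw [real_smul]
  push_cast
  field_simp
  ring

theorem mul_div_sqrt_mul_sqrt_smul_eq {z w : ℂ} (hz : z.im ≠ 0) (hw : w.im ≠ 0) (s t : ℝ) :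
    (s * t / (Real.sqrt (1 + s ^ 2) * Real.sqrt (1 + t ^ 2))) •
        (z * w * (Real.sqrt (1 + s ^ 2) : ℂ) * (Real.sqrt (1 + t ^ 2) : ℂ) /
          ((1 - z * s) * (1 - w * t))) =
      ((1 - z * s)⁻¹ - 1) * ((1 - w * t)⁻¹ - 1) := by
  have hs : (Real.sqrt (1 + s ^ 2) : ℂ) ≠ 0 := ofReal_ne_zero.2 (by positivity)
  have ht : (Real.sqrt (1 + t ^ 2) : ℂ) ≠ 0 := ofReal_ne_zero.2 (by positivity)
  have h1 : 1 - (s : ℂ) * z ≠ 0 := mul_comm z s ▸ one_sub_mul_ofReal_ne_zero hz s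
  have h2 : 1 - (t : ℂ) * w ≠ 0 := mul_comm w t ▸ one_sub_mul_ofReal_ne_zero hw t
  rw [real_smul]
  push_cast
  field_simp
  ring

section

variable {α E : Type*} [MeasurableSpace α] [NormedAddCommGroup E] [NormedSpace ℝ E]
  {ν : Measure α} {u : α → ℝ} {z : ℂ}

theorem integrable_inv_one_sub_mul_ofReal [IsFiniteMeasure ν] (hz : z.im ≠ 0)
    (hu : Measurable u) : Integrable (fun p => (1 - z * u p)⁻¹) ν :=
  .of_bound (by fun_prop) _ (.of_forall fun p => norm_inv_one_sub_mul_ofReal_le hz (u p))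

theorem integrable_inv_one_sub_mul_ofReal_sub_one_mul (hz : z.im ≠ 0) (hu : Measurable u)
    {g : α → ℂ} (hg : Integrable g ν) : Integrable (fun p => ((1 - z * u p)⁻¹ - 1) * g p) ν :=
  hg.bdd_mul (c := ‖z‖ / |z.im| + 1) (by fun_prop) (.of_forall fun p =>
    (norm_sub_le _ _).trans (by simpa using norm_inv_one_sub_mul_ofReal_le hz (u p)))

theorem integrable_div_one_add_sq [IsFiniteMeasure ν] (hu : Measurable u) :
    Integrable (fun p => u p / (1 + u p ^ 2)) ν :=
  .of_bound (by fun_prop : Measurable _).aestronglyMeasurable 1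
    (.of_forall fun p => abs_div_one_add_sq_le_one (u p))

theorem toReal_measure_univ_smul_integral_inv_smul [IsFiniteMeasure ν] (f : α → E) :
    (ν Set.univ).toReal • ∫ x, f x ∂(ν Set.univ)⁻¹ • ν = ∫ x, f x ∂ν := by
  rcases eq_or_ne ν 0 with rfl | hν
  · simp
  rw [integral_smul_measure, smul_smul, ENNReal.toReal_inv, mul_inv_cancel₀, one_smul]
  exact ENNReal.toReal_ne_zero.2 ⟨Measure.measure_univ_ne_zero.2 hν, measure_ne_top _ _⟩

theorem integral_withDensity_ofReal {g : α → ℝ} (hg : Measurable g) (f : α → E) :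
    ∫ x, f x ∂ν.withDensity (fun x => ENNReal.ofReal (g x)) = ∫ x, max (g x) 0 • f x ∂ν :=
  integral_withDensity_eq_integral_toReal_smul (by fun_prop)
    (.of_forall fun _ => ENNReal.ofReal_lt_top) f

theorem integral_withDensity_sq_div_one_add_sq (hu : Measurable u) (hz : z.im ≠ 0) :
    ∫ p, (z ^ 2 + z * u p) / (1 - z * u p) ∂ν.withDensity
        (fun p => ENNReal.ofReal (u p ^ 2 / (1 + u p ^ 2))) =
      ∫ p, (1 - z * u p)⁻¹ - 1 - z * ((u p / (1 + u p ^ 2) : ℝ) : ℂ) ∂ν := by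
  rw [integral_withDensity_ofReal (by fun_prop)]
  refine integral_congr_ae (.of_forall fun p => ?_)
  dsimp only
  rw [max_eq_left (by positivity), sq_div_one_add_sq_smul_eq hz]

end

theorem signedIntegralC_withDensityᵥ {τ : Measure (ℝ × ℝ)} {h : ℝ × ℝ → ℝ} (hm : Measurable h)
    (hi : Integrable h τ) {f : ℝ × ℝ → ℂ} (hf : AEStronglyMeasurable f τ)
    (hhf : Integrable (fun p => h p • f p) τ) :
    signedIntegralC (τ.withDensityᵥ h) f = ∫ p, h p • f p ∂τ := by
  have hJ := SignedMeasure.toJordanDecomposition_eq_of_eq_add_withDensity hm hi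
    VectorMeasure.MutuallySingular.zero_left (zero_add _).symm
  have hpart : ∀ r : ℝ × ℝ → ℝ, Measurable r → (∀ p, |r p| ≤ |h p|) →
      Integrable (fun p => r p • f p) τ := fun r hr hrh =>
    hhf.mono (hr.aestronglyMeasurable.smul hf) (.of_forall fun p => by
      simp only [norm_smul, Real.norm_eq_abs]
      exact mul_le_mul_of_nonneg_right (hrh p) (norm_nonneg _))
  simp only [signedIntegralC, hJ, SignedMeasure.toJordanDecomposition_zero,
    JordanDecomposition.zero_posPart, JordanDecomposition.zero_negPart, zero_add,
    integral_withDensity_ofReal hm, integral_withDensity_ofReal (g := fun x => -h x) hm.neg]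
  rw [← integral_sub (hpart _ (by fun_prop) fun p => abs_max_le_max_abs_abs.trans (by simp))
    (hpart _ (by fun_prop) fun p => abs_max_le_max_abs_abs.trans (by simp))]
  simp only [← sub_smul, max_zero_sub_max_neg_zero_eq_self]

theorem signedIntegralC_eq_integral_inv_sub_one_mul_inv_sub_one {τ : Measure (ℝ × ℝ)}
    [IsFiniteMeasure τ] {ρ : SignedMeasure (ℝ × ℝ)}
    (hρ : ∀ E : Set (ℝ × ℝ), MeasurableSet E →
      ρ E = ∫ p in E, p.1 * p.2 / (Real.sqrt (1 + p.1 ^ 2) * Real.sqrt (1 + p.2 ^ 2)) ∂τ)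
    {z w : ℂ} (hz : z.im ≠ 0) (hw : w.im ≠ 0) :
    signedIntegralC ρ (fun p : ℝ × ℝ =>
        z * w * (Real.sqrt (1 + p.1 ^ 2) : ℂ) * (Real.sqrt (1 + p.2 ^ 2) : ℂ) /
          ((1 - z * (p.1 : ℂ)) * (1 - w * (p.2 : ℂ)))) =
      ∫ p : ℝ × ℝ, ((1 - z * p.1)⁻¹ - 1) * ((1 - w * p.2)⁻¹ - 1) ∂τ := by
  set h : ℝ × ℝ → ℝ := fun p =>
    p.1 * p.2 / (Real.sqrt (1 + p.1 ^ 2) * Real.sqrt (1 + p.2 ^ 2)) with h_def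
  have hm : Measurable h := by fun_prop
  have hh : Integrable h τ := .of_bound hm.aestronglyMeasurable 1
    (.of_forall fun p => abs_mul_div_sqrt_one_add_sq_le_one p.1 p.2)
  have hρτ : ρ = τ.withDensityᵥ h :=
    VectorMeasure.ext fun E hE => by rw [withDensityᵥ_apply hh hE, hρ E hE]
  have iK : Integrable (fun p : ℝ × ℝ => ((1 - z * p.1)⁻¹ - 1) * ((1 - w * p.2)⁻¹ - 1)) τ :=
    integrable_inv_one_sub_mul_ofReal_sub_one_mul hz measurable_fst
      ((integrable_inv_one_sub_mul_ofReal hw measurable_snd).sub (integrable_const 1))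
  rw [hρτ, signedIntegralC_withDensityᵥ hm hh (by fun_prop : Measurable _).aestronglyMeasurable]
  · simp only [h_def, mul_div_sqrt_mul_sqrt_smul_eq hz hw]
  · simpa only [h_def, mul_div_sqrt_mul_sqrt_smul_eq hz hw] using iK

theorem poisson_form_of_off_axis_part_general (τ : Measure (ℝ × ℝ)) [IsFiniteMeasure τ]
    (ρ₁ ρ₂ : Measure (ℝ × ℝ)) (ρ : SignedMeasure (ℝ × ℝ))
    (h1 : ρ₁ = τ.withDensity (fun p : ℝ × ℝ => ENNReal.ofReal (p.1 ^ 2 / (1 + p.1 ^ 2))))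
    (h2 : ρ₂ = τ.withDensity (fun p : ℝ × ℝ => ENNReal.ofReal (p.2 ^ 2 / (1 + p.2 ^ 2))))
    (hρ : ∀ E : Set (ℝ × ℝ), MeasurableSet E →
      ρ E = ∫ p in E, p.1 * p.2 / (Real.sqrt (1 + p.1 ^ 2) * Real.sqrt (1 + p.2 ^ 2)) ∂τ)
    (lam : ℝ) (hlam : lam = (τ Set.univ).toReal)
    (μ : Measure (ℝ × ℝ)) (hμ : μ = (τ Set.univ)⁻¹ • τ)
    (a b : ℝ)
    (ha : a = -lam * ∫ p : ℝ × ℝ, p.1 / (1 + p.1 ^ 2) ∂μ)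
    (hb : b = -lam * ∫ p : ℝ × ℝ, p.2 / (1 + p.2 ^ 2) ∂μ)
    (z w : ℂ) (hz : z.im ≠ 0) (hw : w.im ≠ 0) :
    (∫ p : ℝ × ℝ, (z ^ 2 + z * (p.1 : ℂ)) / (1 - z * (p.1 : ℂ)) ∂ρ₁) +
        (∫ p : ℝ × ℝ, (w ^ 2 + w * (p.2 : ℂ)) / (1 - w * (p.2 : ℂ)) ∂ρ₂) +
        signedIntegralC ρ (fun p : ℝ × ℝ =>
          z * w * (Real.sqrt (1 + p.1 ^ 2) : ℂ) * (Real.sqrt (1 + p.2 ^ 2) : ℂ) /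
            ((1 - z * (p.1 : ℂ)) * (1 - w * (p.2 : ℂ)))) =
      (a : ℂ) * z + (b : ℂ) * w - (lam : ℂ) +
        (lam : ℂ) * ∫ p : ℝ × ℝ, ((1 - z * (p.1 : ℂ)) * (1 - w * (p.2 : ℂ)))⁻¹ ∂μ := by
  -- `fun_prop` builds the integrability side goals of the final rewrites from these facts.
  have iA : Integrable (fun p : ℝ × ℝ => (1 - z * p.1)⁻¹) τ :=
    integrable_inv_one_sub_mul_ofReal hz measurable_fst
  have iB : Integrable (fun p : ℝ × ℝ => (1 - w * p.2)⁻¹) τ :=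
    integrable_inv_one_sub_mul_ofReal hw measurable_snd
  have iAB : Integrable (fun p : ℝ × ℝ => (1 - z * p.1)⁻¹ * (1 - w * p.2)⁻¹) τ :=
    iB.bdd_mul (by fun_prop) (.of_forall fun p => norm_inv_one_sub_mul_ofReal_le hz p.1)
  have iK : Integrable (fun p : ℝ × ℝ => ((1 - z * p.1)⁻¹ - 1) * ((1 - w * p.2)⁻¹ - 1)) τ :=
    integrable_inv_one_sub_mul_ofReal_sub_one_mul hz measurable_fst (iB.sub (integrable_const 1))
  have iX : Integrable (fun p : ℝ × ℝ => ((p.1 / (1 + p.1 ^ 2) : ℝ) : ℂ)) τ :=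
    (integrable_div_one_add_sq measurable_fst).ofReal
  have iY : Integrable (fun p : ℝ × ℝ => ((p.2 / (1 + p.2 ^ 2) : ℝ) : ℂ)) τ :=
    (integrable_div_one_add_sq measurable_snd).ofReal
  rw [hμ, hlam, neg_mul, ← smul_eq_mul, toReal_measure_univ_smul_integral_inv_smul] at ha hb
  rw [h1, h2, integral_withDensity_sq_div_one_add_sq measurable_fst hz,
    integral_withDensity_sq_div_one_add_sq measurable_snd hw,
    signedIntegralC_eq_integral_inv_sub_one_mul_inv_sub_one hρ hz hw, ha, hb, hμ,
    ← real_smul (x := lam), hlam, toReal_measure_univ_smul_integral_inv_smul]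
  have elam : ((τ Set.univ).toReal : ℂ) = ∫ _ : ℝ × ℝ, (1 : ℂ) ∂τ := by simp [Measure.real]
  simp only [ofReal_neg, neg_mul, mul_inv, ← integral_complex_ofReal, ← integral_mul_const, elam]
  rw [← integral_add, ← integral_add, ← integral_neg, ← integral_neg, ← integral_add,
    ← integral_sub, ← integral_add]
  · exact integral_congr_ae (.of_forall fun p => by ring)
  all_goals fun_prop

theorem poisson_form_of_off_axis_part (n : ℕ) (τ : Measure (ℝ × ℝ)) [IsFiniteMeasure τ]
    (ρ₁ ρ₂ : Measure (ℝ × ℝ)) (ρ : SignedMeasure (ℝ × ℝ))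
    (hsupp : τ {p : ℝ × ℝ | ¬((1 : ℝ) / (n + 1) ≤ |p.1| ∧ (1 : ℝ) / (n + 1) ≤ |p.2|)} = 0)
    (h1 : ρ₁ = τ.withDensity (fun p : ℝ × ℝ => ENNReal.ofReal (p.1 ^ 2 / (1 + p.1 ^ 2))))
    (h2 : ρ₂ = τ.withDensity (fun p : ℝ × ℝ => ENNReal.ofReal (p.2 ^ 2 / (1 + p.2 ^ 2))))
    (hρ : ∀ E : Set (ℝ × ℝ), MeasurableSet E →
      ρ E = ∫ p in E, p.1 * p.2 / (Real.sqrt (1 + p.1 ^ 2) * Real.sqrt (1 + p.2 ^ 2)) ∂τ)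
    (lam : ℝ) (hlam : lam = (τ Set.univ).toReal) (hpos : 0 < lam)
    (μ : Measure (ℝ × ℝ)) (hμ : μ = (τ Set.univ)⁻¹ • τ)
    (a b : ℝ)
    (ha : a = -lam * ∫ p : ℝ × ℝ, p.1 / (1 + p.1 ^ 2) ∂μ)
    (hb : b = -lam * ∫ p : ℝ × ℝ, p.2 / (1 + p.2 ^ 2) ∂μ)
    (z w : ℂ) (hz : z.im ≠ 0) (hw : w.im ≠ 0) :
    (∫ p : ℝ × ℝ, (z ^ 2 + z * (p.1 : ℂ)) / (1 - z * (p.1 : ℂ)) ∂ρ₁) +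
        (∫ p : ℝ × ℝ, (w ^ 2 + w * (p.2 : ℂ)) / (1 - w * (p.2 : ℂ)) ∂ρ₂) +
        signedIntegralC ρ (fun p : ℝ × ℝ =>
          z * w * (Real.sqrt (1 + p.1 ^ 2) : ℂ) * (Real.sqrt (1 + p.2 ^ 2) : ℂ) /
            ((1 - z * (p.1 : ℂ)) * (1 - w * (p.2 : ℂ)))) =
      (a : ℂ) * z + (b : ℂ) * w - (lam : ℂ) +
        (lam : ℂ) * ∫ p : ℝ × ℝ, ((1 - z * (p.1 : ℂ)) * (1 - w * (p.2 : ℂ)))⁻¹ ∂μ :=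
  poisson_form_of_off_axis_part_general τ ρ₁ ρ₂ ρ h1 h2 hρ lam hlam μ hμ a b ha hb z w hz hw
end
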